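/- Let G = (V,E) be a finite simple graph. The number of connected components of ℝ^V minus the union of the hyperplanes {z : z_u = z_w} over all edges {u,w} ∈ E equals (−1)^{|V|} χ_G(−1). -/

import Mathlib

open SimpleGraph Polynomial

/-- Number of proper colorings of `G` with `k` colors. -/
noncomputable def properColoringCount {V : Type*} (G : SimpleGraph V) (k : ℕ) : ℕ :=
  Nat.card {f : V → Fin k // ∀ u v, G.Adj u v → f u ≠ f v}

/-- `P` is the chromatic polynomial of `G`. -/
def IsChromaticPoly {V : Type*} (G : SimpleGraph V) (P : Polynomial ℤ) : Prop :=
  ∀ k : ℕ, P.eval (k : ℤ) = properColoringCount G k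

/-- The complement in `ℝ^V` of the graphical arrangement of `G` (hyperplanes
`z_u = z_w` over edges `{u,w}`). -/
def graphicalComplement {V : Type*} (G : SimpleGraph V) : Set (V → ℝ) :=
  {z | ∀ u w, G.Adj u w → z u ≠ z w}

/-!
A point `z` of the complement orients every edge towards its larger coordinate. Regions are
convex, so two points lie in the same region iff they induce the same orientation, and every
acyclic orientation is induced by some point, e.g. the one whose coordinate at `v` counts the
predecessors of `v` in the transitive closure. Hence the regions are counted by the acyclic
orientations.

For an edge `e = uw`, an acyclic orientation of `G ∖ e` extends to `G` in two ways if it has no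
directed path between `u` and `w`, and in exactly one way otherwise; the orientations without
such a path are those that descend to `G / e`. So the number `a(G)` of acyclic orientations
satisfies `a(G) = a(G ∖ e) + a(G / e)`, matching `χ_G = χ_{G ∖ e} - χ_{G / e}`, and induction on
vertices and edges gives `a(G) = (-1)^|V| χ_G(-1)`.
-/

open Function Relation

theorem Nat.card_subtype_add_card_subtype_of_forall_or {α : Type*} [Finite α] {p q : α → Prop}
    (h : ∀ a, p a ∨ q a) :
    Nat.card {a // p a} + Nat.card {a // q a} = Nat.card α + Nat.card {a // p a ∧ q a} := by
  have hunion : {a | p a} ∪ {a | q a} = Set.univ := Set.eq_univ_of_forall h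
  have := Set.ncard_union_add_ncard_inter {a | p a} {a | q a}
  rw [hunion, Set.ncard_univ] at this
  simp only [← Nat.card_coe_set_eq] at this
  exact this.symm

theorem Nat.card_subtype_ne {α : Type*} [Finite α] (a : α) :
    Nat.card {x // x ≠ a} = Nat.card α - 1 := by
  have := Fintype.ofFinite α
  classical
  simp [Nat.card_eq_fintype_card, Fintype.card_subtype_compl]

namespace Relation

variable {α : Type*} {r : α → α → Prop} {u w : α}

def Acyclic (r : α → α → Prop) : Prop :=
  ∀ a, ¬ TransGen r a a

theorem Acyclic.asymm (h : Acyclic r) {a b : α} (hab : r a b) : ¬ r b a :=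
  fun hba => h a (TransGen.head hab (.single hba))

theorem TransGen.lt_comp {β : Type*} [Preorder β] {z : α → β} (hz : ∀ a b, r a b → z a < z b)
    {a b : α} (h : TransGen r a b) : z a < z b := by
  induction h with
  | single hab => exact hz _ _ hab
  | tail _ hbc ih => exact ih.trans (hz _ _ hbc)

theorem acyclic_of_lt_comp {β : Type*} [Preorder β] (z : α → β) (hz : ∀ a b, r a b → z a < z b) :
    Acyclic r :=
  fun _ ha => lt_irrefl _ (TransGen.lt_comp hz ha)

theorem Acyclic.exists_lt_comp [Finite α] (h : Acyclic r) :
    ∃ z : α → ℝ, ∀ a b, r a b → z a < z b := by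
  refine ⟨fun a => {x | TransGen r x a}.ncard, fun a b hab => ?_⟩
  have hsub : {x | TransGen r x a} ⊂ {x | TransGen r x b} :=
    (Set.ssubset_iff_of_subset fun x hx => hx.tail hab).2 ⟨a, .single hab, h a⟩
  exact Nat.cast_lt.2 (Set.ncard_lt_ncard hsub)

theorem TransGen.adjoin_cases {x y : α} (h : TransGen (fun a b => r a b ∨ a = u ∧ b = w) x y) :
    TransGen r x y ∨ ReflTransGen r x u ∧ ReflTransGen r w y := by
  induction h with
  | single hxy =>
    rcases hxy with hxy | ⟨rfl, rfl⟩
    · exact .inl (.single hxy)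
    · exact .inr ⟨.refl, .refl⟩
  | tail _ hby ih =>
    rcases hby with hby | ⟨rfl, rfl⟩
    · exact ih.imp (·.tail hby) fun ⟨hxu, hwb⟩ => ⟨hxu, hwb.tail hby⟩
    · exact .inr ⟨ih.elim TransGen.to_reflTransGen And.left, .refl⟩

theorem acyclic_adjoin_iff :
    Acyclic (fun a b => r a b ∨ a = u ∧ b = w) ↔ Acyclic r ∧ ¬ ReflTransGen r w u := by
  constructor
  · intro h
    refine ⟨fun a ha => h a (TransGen.mono (fun _ _ => .inl) a a ha), fun hwu => ?_⟩
    exact h u (TransGen.head' (.inr ⟨rfl, rfl⟩) (ReflTransGen.mono (fun _ _ => .inl) w u hwu))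
  · rintro ⟨hr, hwu⟩ a ha
    rcases TransGen.adjoin_cases ha with ha | ⟨hau, hwa⟩
    · exact hr a ha
    · exact hwu (hwa.trans hau)

end Relation

namespace SimpleGraph

variable {V W : Type*}

structure IsAcyclicOrientation (G : SimpleGraph V) (r : V → V → Prop) : Prop where
  adj_of_rel : ∀ ⦃a b⦄, r a b → G.Adj a b
  rel_or_rel : ∀ ⦃a b⦄, G.Adj a b → r a b ∨ r b a
  acyclic : Acyclic r

abbrev AcyclicOrientation (G : SimpleGraph V) : Type _ :=
  {r : V → V → Prop // G.IsAcyclicOrientation r}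

theorem IsAcyclicOrientation.rel_iff_not_rel {G : SimpleGraph V} {r : V → V → Prop}
    (hr : G.IsAcyclicOrientation r) {a b : V} (hab : G.Adj a b) : r a b ↔ ¬ r b a :=
  ⟨hr.acyclic.asymm, (hr.rel_or_rel hab).resolve_right⟩

theorem card_acyclicOrientation_bot : Nat.card (⊥ : SimpleGraph V).AcyclicOrientation = 1 := by
  refine Nat.card_eq_one_iff_unique.2 ⟨⟨fun r s => ?_⟩, ⟨⟨fun _ _ => False, ?_⟩⟩⟩
  · exact Subtype.ext (funext₂ fun a b =>
      propext (iff_of_false (r.2.adj_of_rel · |>.elim) (s.2.adj_of_rel · |>.elim)))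
  · exact ⟨fun _ _ => False.elim, fun _ _ h => h.elim,
      acyclic_of_lt_comp (fun _ => 0) fun _ _ => False.elim⟩

def orientationComap (H : SimpleGraph V) (f : V → W) (τ : W → W → Prop) : V → V → Prop :=
  fun a b => H.Adj a b ∧ τ (f a) (f b)

theorem IsAcyclicOrientation.comap {H : SimpleGraph V} {G : SimpleGraph W} {τ : W → W → Prop}
    (φ : H →g G) (hτ : G.IsAcyclicOrientation τ) :
    H.IsAcyclicOrientation (H.orientationComap φ τ) where
  adj_of_rel _ _ h := h.1
  rel_or_rel _ _ hab := (hτ.rel_or_rel (φ.map_adj hab)).imp (⟨hab, ·⟩) (⟨hab.symm, ·⟩)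
  acyclic a ha := hτ.acyclic (φ a) (TransGen.lift φ (fun _ _ h => h.2) a a ha)

theorem IsAcyclicOrientation.map {H : SimpleGraph V} {σ : V → V → Prop} (f : V → W)
    (hσ : H.IsAcyclicOrientation σ) (hmap : Acyclic (Relation.Map σ f f)) :
    (H.map f).IsAcyclicOrientation (Relation.Map σ f f) where
  adj_of_rel := by
    rintro _ _ ⟨a, b, hab, rfl, rfl⟩
    refine ⟨fun he => hmap (f b) ?_, a, b, hσ.adj_of_rel hab, rfl, rfl⟩
    exact TransGen.single ⟨a, b, hab, he, rfl⟩
  rel_or_rel := by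
    rintro _ _ ⟨-, a, b, hab, rfl, rfl⟩
    exact (hσ.rel_or_rel hab).imp (⟨a, b, ·, rfl, rfl⟩) (⟨b, a, ·, rfl, rfl⟩)
  acyclic := hmap

theorem map_orientationComap {H : SimpleGraph V} {f : V → W} {τ : W → W → Prop}
    (hτ : (H.map f).IsAcyclicOrientation τ) : Relation.Map (H.orientationComap f τ) f f = τ := by
  ext x y
  constructor
  · rintro ⟨a, b, ⟨-, h⟩, rfl, rfl⟩
    exact h
  · intro h
    obtain ⟨-, a, b, hab, rfl, rfl⟩ := hτ.adj_of_rel h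
    exact ⟨a, b, ⟨hab, h⟩, rfl, rfl⟩

theorem orientationComap_map {H : SimpleGraph V} {σ : V → V → Prop} {f : V → W}
    (hσ : H.IsAcyclicOrientation σ) (hmap : Acyclic (Relation.Map σ f f)) :
    H.orientationComap f (Relation.Map σ f f) = σ := by
  ext a b
  constructor
  · rintro ⟨hab, a', b', h, ha, hb⟩
    refine (hσ.rel_or_rel hab).resolve_right fun hba => hmap.asymm ⟨a', b', h, ha, hb⟩ ?_
    exact ⟨b, a, hba, rfl, rfl⟩
  · exact fun h => ⟨hσ.adj_of_rel h, a, b, h, rfl, rfl⟩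

def acyclicOrientationMapEquiv (H : SimpleGraph V) {f : V → W}
    (hf : ∀ {a b}, H.Adj a b → f a ≠ f b) :
    (H.map f).AcyclicOrientation ≃
      {σ : H.AcyclicOrientation // Acyclic (Relation.Map σ.1 f f)} where
  toFun τ := ⟨⟨_, τ.2.comap (Hom.map f H hf)⟩, (map_orientationComap τ.2).symm ▸ τ.2.acyclic⟩
  invFun σ := ⟨_, σ.1.2.map f σ.2⟩
  left_inv τ := Subtype.ext (map_orientationComap τ.2)
  right_inv σ := Subtype.ext (Subtype.ext (orientationComap_map σ.1.2 σ.2))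

theorem properColoringCount_map {H : SimpleGraph V} {f : V → W} (hsurj : Surjective f)
    (hf : ∀ {a b}, H.Adj a b → f a ≠ f b) (k : ℕ) :
    properColoringCount (H.map f) k =
      Nat.card {c : {c : V → Fin k // ∀ a b, H.Adj a b → c a ≠ c b} // ∃ c', c' ∘ f = c.1} := by
  refine Nat.card_eq_of_bijective
    (fun c => ⟨⟨c.1 ∘ f, fun a b hab => c.2 _ _ ⟨hf hab, a, b, hab, rfl, rfl⟩⟩, c.1, rfl⟩)
    ⟨fun c d h => Subtype.ext (hsurj.injective_comp_right (congrArg (·.1.1) h)), ?_⟩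
  rintro ⟨c₀, c, hcf⟩
  refine ⟨⟨c, ?_⟩, Subtype.ext (Subtype.ext hcf)⟩
  rintro _ _ ⟨-, a, b, hab, rfl, rfl⟩
  simpa [← hcf] using c₀.2 a b hab

section Regions

variable {G : SimpleGraph V}

def ascendingOrientation (G : SimpleGraph V) (z : V → ℝ) : V → V → Prop :=
  fun a b => G.Adj a b ∧ z a < z b

theorem isAcyclicOrientation_ascendingOrientation {z : V → ℝ} (hz : z ∈ graphicalComplement G) :
    G.IsAcyclicOrientation (G.ascendingOrientation z) where
  adj_of_rel _ _ h := h.1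
  rel_or_rel a b hab := (hz a b hab).lt_or_gt.imp (⟨hab, ·⟩) (⟨hab.symm, ·⟩)
  acyclic := acyclic_of_lt_comp z fun _ _ h => h.2

theorem IsAcyclicOrientation.exists_ascendingOrientation_eq [Finite V] {r : V → V → Prop}
    (hr : G.IsAcyclicOrientation r) :
    ∃ z ∈ graphicalComplement G, G.ascendingOrientation z = r := by
  obtain ⟨z, hz⟩ := hr.acyclic.exists_lt_comp
  refine ⟨z, fun a b hab => ?_, ?_⟩
  · rcases hr.rel_or_rel hab with h | h
    exacts [(hz a b h).ne, (hz b a h).ne']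
  · ext a b
    refine ⟨fun ⟨hab, hlt⟩ => ?_, fun h => ⟨hr.adj_of_rel h, hz a b h⟩⟩
    exact (hr.rel_or_rel hab).resolve_right fun h => lt_asymm hlt (hz b a h)

theorem ascendingOrientation_eq_of_mem_connectedComponentIn {x y : V → ℝ}
    (hx : x ∈ graphicalComplement G)
    (hy : y ∈ connectedComponentIn (graphicalComplement G) x) :
    G.ascendingOrientation y = G.ascendingOrientation x := by
  ext a b
  by_cases hab : G.Adj a b
  · have hsub : connectedComponentIn (graphicalComplement G) x ⊆ {z | z a < z b} ∨
        connectedComponentIn (graphicalComplement G) x ⊆ {z | z b < z a} :=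
      isPreconnected_connectedComponentIn.subset_or_subset
        (isOpen_lt (continuous_apply a) (continuous_apply b))
        (isOpen_lt (continuous_apply b) (continuous_apply a))
        (Set.disjoint_left.2 fun z (h₁ : z a < z b) (h₂ : z b < z a) => lt_asymm h₁ h₂)
        fun z hz => (connectedComponentIn_subset _ _ hz a b hab).lt_or_gt
    have hxx := mem_connectedComponentIn hx
    simp only [ascendingOrientation, hab, true_and]
    rcases hsub with h | h
    · exact iff_of_true (h hy) (h hxx)
    · exact iff_of_false (lt_asymm (h hy)) (lt_asymm (h hxx))
  · simp [ascendingOrientation, hab]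

theorem connectedComponentIn_eq_of_ascendingOrientation_eq {x y : V → ℝ}
    (hx : x ∈ graphicalComplement G) (h : G.ascendingOrientation x = G.ascendingOrientation y) :
    connectedComponentIn (graphicalComplement G) x =
      connectedComponentIn (graphicalComplement G) y := by
  have hmono : ∀ p q, G.Adj p q → x p < x q → ∀ z ∈ segment ℝ x y, z p < z q := by
    rintro p q hpq hxpq _ ⟨s, t, hs, ht, hst, rfl⟩
    have hypq : y p < y q := ((congrFun₂ h p q).mp ⟨hpq, hxpq⟩).2
    simp only [Pi.add_apply, Pi.smul_apply, smul_eq_mul]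
    rcases hs.eq_or_lt with rfl | hs
    · obtain rfl : t = 1 := by linarith
      linarith
    · nlinarith [mul_lt_mul_of_pos_left hxpq hs, mul_le_mul_of_nonneg_left hypq.le ht]
  have hseg : segment ℝ x y ⊆ graphicalComplement G := fun z hz p q hpq =>
    (hx p q hpq).lt_or_gt.elim (fun h => (hmono p q hpq h z hz).ne)
      fun h => (hmono q p hpq.symm h z hz).ne'
  exact connectedComponentIn_eq <| (convex_segment x y).isPreconnected.subset_connectedComponentIn
    (left_mem_segment ℝ x y) hseg (right_mem_segment ℝ x y)

theorem card_regions_eq_card_acyclicOrientation [Finite V] (G : SimpleGraph V) :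
    Nat.card {C : Set (V → ℝ) //
        ∃ x ∈ graphicalComplement G, C = connectedComponentIn (graphicalComplement G) x} =
      Nat.card G.AcyclicOrientation := by
  choose z hz hzr using fun r : G.AcyclicOrientation => r.2.exists_ascendingOrientation_eq
  refine (Nat.card_eq_of_bijective (fun r => ⟨_, z r, hz r, rfl⟩) ⟨fun r s hrs => ?_, ?_⟩).symm
  · have hmem : z s ∈ connectedComponentIn (graphicalComplement G) (z r) := by
      have hrs' : connectedComponentIn (graphicalComplement G) (z r) =
          connectedComponentIn (graphicalComplement G) (z s) := congrArg Subtype.val hrs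
      rw [hrs']
      exact mem_connectedComponentIn (hz s)
    exact Subtype.ext ((hzr r).symm.trans
      ((ascendingOrientation_eq_of_mem_connectedComponentIn (hz r) hmem).symm.trans (hzr s)))
  · rintro ⟨_, x, hx, rfl⟩
    let r : G.AcyclicOrientation := ⟨_, isAcyclicOrientation_ascendingOrientation hx⟩
    exact ⟨r, Subtype.ext (connectedComponentIn_eq_of_ascendingOrientation_eq (hz r) (hzr r))⟩

end Regions

end SimpleGraph

section MergeInto

variable {V : Type*} {u w : V} [DecidableEq V]

/-- Contracting the edge `uw` onto `u`: the vertices of `G / uw` are modelled as `{v // v ≠ w}`. -/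
def mergeInto (hne : u ≠ w) (v : V) : {v : V // v ≠ w} :=
  if h : v = w then ⟨u, hne⟩ else ⟨v, h⟩

variable (hne : u ≠ w)

theorem coe_mergeInto (v : V) : (mergeInto hne v : V) = if v = w then u else v := by
  unfold mergeInto
  split_ifs <;> rfl

theorem mergeInto_coe (x : {v : V // v ≠ w}) : mergeInto hne x = x := by
  simp [mergeInto, x.2]

theorem mergeInto_surjective : Surjective (mergeInto hne) :=
  fun x => ⟨x, mergeInto_coe hne x⟩

theorem mergeInto_left_eq_right : mergeInto hne u = mergeInto hne w := by
  simp [mergeInto, hne]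

theorem apply_coe_mergeInto {β : Type*} {g : V → β} (hg : g u = g w) (v : V) :
    g (mergeInto hne v) = g v := by
  rw [coe_mergeInto]
  split_ifs with hv
  · rw [hg, hv]
  · rfl

theorem exists_comp_mergeInto_eq_iff {β : Type*} {g : V → β} :
    (∃ g' : {v : V // v ≠ w} → β, g' ∘ mergeInto hne = g) ↔ g u = g w := by
  constructor
  · rintro ⟨g', rfl⟩
    exact congrArg g' (mergeInto_left_eq_right hne)
  · exact fun hg => ⟨fun x => g x, funext (apply_coe_mergeInto hne hg)⟩

theorem acyclic_map_mergeInto_iff [Finite V] {σ : V → V → Prop} (hσ : Acyclic σ) :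
    Acyclic (Relation.Map σ (mergeInto hne) (mergeInto hne)) ↔
      ¬ ReflTransGen σ u w ∧ ¬ ReflTransGen σ w u := by
  constructor
  · intro h
    have hpath : ∀ {a b}, mergeInto hne a = mergeInto hne b → ¬ TransGen σ a b := by
      intro a b hab hσab
      have : TransGen (Relation.Map σ (mergeInto hne) (mergeInto hne)) (mergeInto hne a)
          (mergeInto hne b) :=
        TransGen.lift (mergeInto hne) (fun a b h => ⟨a, b, h, rfl, rfl⟩) a b hσab
      exact h _ (hab ▸ this)
    refine ⟨fun huw => ?_, fun hwu => ?_⟩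
    · exact (reflTransGen_iff_eq_or_transGen.1 huw).elim (hne ·.symm)
        (hpath (mergeInto_left_eq_right hne))
    · exact (reflTransGen_iff_eq_or_transGen.1 hwu).elim hne
        (hpath (mergeInto_left_eq_right hne).symm)
  · rintro ⟨huw, hwu⟩
    obtain ⟨z₁, hz₁⟩ := (acyclic_adjoin_iff.2 ⟨hσ, hwu⟩).exists_lt_comp
    obtain ⟨z₂, hz₂⟩ := (acyclic_adjoin_iff.2 ⟨hσ, huw⟩).exists_lt_comp
    have h₁ : z₁ u < z₁ w := hz₁ u w (.inr ⟨rfl, rfl⟩)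
    have h₂ : z₂ w < z₂ u := hz₂ w u (.inr ⟨rfl, rfl⟩)
    -- `z₁`, `z₂` are potentials of the two extensions of `σ` across `uw`; this positive
    -- combination of them is a potential of `σ` taking the same value at `u` and `w`.
    let g v := (z₂ u - z₂ w) * z₁ v + (z₁ w - z₁ u) * z₂ v
    have hg : g u = g w := by ring
    refine acyclic_of_lt_comp (fun x => g x) ?_
    rintro _ _ ⟨a, b, hab, rfl, rfl⟩
    simp only [apply_coe_mergeInto hne hg]
    have := hz₁ a b (.inl hab)
    have := hz₂ a b (.inl hab)
    nlinarith

end MergeInto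

namespace SimpleGraph

variable {V W : Type*} {G : SimpleGraph V} {u w : V}

theorem deleteEdges_singleton_lt (huw : G.Adj u w) : G.deleteEdges {s(u, w)} < G :=
  (G.deleteEdges_le _).lt_of_ne fun h => by simpa using (congrArg (Adj · u w) h).mpr huw

theorem isAcyclicOrientation_adjoin_iff (huw : G.Adj u w) {σ : V → V → Prop}
    (hσ : (G.deleteEdges {s(u, w)}).IsAcyclicOrientation σ) :
    G.IsAcyclicOrientation (fun a b => σ a b ∨ a = u ∧ b = w) ↔ ¬ ReflTransGen σ w u := by
  refine ⟨fun h => (acyclic_adjoin_iff.1 h.acyclic).2, fun hwu => ⟨?_, fun a b hab => ?_,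
    acyclic_adjoin_iff.2 ⟨hσ.acyclic, hwu⟩⟩⟩
  · rintro a b (h | ⟨rfl, rfl⟩)
    exacts [(hσ.adj_of_rel h).1, huw]
  · by_cases he : s(a, b) = s(u, w)
    · rcases Sym2.eq_iff.1 he with ⟨rfl, rfl⟩ | ⟨rfl, rfl⟩
      exacts [.inl (.inr ⟨rfl, rfl⟩), .inr (.inr ⟨rfl, rfl⟩)]
    · exact (hσ.rel_or_rel (by simp [hab, he])).imp .inl .inl

theorem adjoin_orientationComap_deleteEdges {r : V → V → Prop} (hr : G.IsAcyclicOrientation r)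
    (hruw : r u w) :
    (fun a b => (G.deleteEdges {s(u, w)}).orientationComap id r a b ∨ a = u ∧ b = w) = r := by
  ext a b
  constructor
  · rintro (⟨-, h⟩ | ⟨rfl, rfl⟩)
    exacts [h, hruw]
  · intro h
    by_cases he : s(a, b) = s(u, w)
    · rcases Sym2.eq_iff.1 he with ⟨rfl, rfl⟩ | ⟨rfl, rfl⟩
      exacts [.inr ⟨rfl, rfl⟩, absurd hruw (hr.acyclic.asymm h)]
    · exact .inl ⟨by simp [hr.adj_of_rel h, he], h⟩

theorem orientationComap_deleteEdges_adjoin {σ : V → V → Prop}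
    (hσ : (G.deleteEdges {s(u, w)}).IsAcyclicOrientation σ) :
    (G.deleteEdges {s(u, w)}).orientationComap id (fun a b => σ a b ∨ a = u ∧ b = w) = σ := by
  ext a b
  constructor
  · rintro ⟨hab, h | ⟨rfl, rfl⟩⟩
    · exact h
    · simp at hab
  · exact fun h => ⟨hσ.adj_of_rel h, .inl h⟩

def acyclicOrientationDeleteEdgesEquiv (huw : G.Adj u w) :
    {r : G.AcyclicOrientation // r.1 u w} ≃
      {σ : (G.deleteEdges {s(u, w)}).AcyclicOrientation // ¬ ReflTransGen σ.1 w u} where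
  toFun r := ⟨⟨_, r.1.2.comap (Hom.ofLE (G.deleteEdges_le _))⟩,
    (isAcyclicOrientation_adjoin_iff huw (r.1.2.comap (Hom.ofLE (G.deleteEdges_le _)))).1
      ((adjoin_orientationComap_deleteEdges r.1.2 r.2).symm ▸ r.1.2)⟩
  invFun σ := ⟨⟨_, (isAcyclicOrientation_adjoin_iff huw σ.1.2).2 σ.2⟩, .inr ⟨rfl, rfl⟩⟩
  left_inv r := Subtype.ext (Subtype.ext (adjoin_orientationComap_deleteEdges r.1.2 r.2))
  right_inv σ := Subtype.ext (Subtype.ext (orientationComap_deleteEdges_adjoin σ.1.2))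

theorem card_acyclicOrientation_eq_card_deleteEdges_add [Finite V] (huw : G.Adj u w) :
    Nat.card G.AcyclicOrientation = Nat.card (G.deleteEdges {s(u, w)}).AcyclicOrientation +
      Nat.card {σ : (G.deleteEdges {s(u, w)}).AcyclicOrientation //
        ¬ ReflTransGen σ.1 u w ∧ ¬ ReflTransGen σ.1 w u} := by
  have hsplit : Nat.card G.AcyclicOrientation =
      Nat.card {r : G.AcyclicOrientation // r.1 w u} +
        Nat.card {r : G.AcyclicOrientation // r.1 u w} := by
    classical
    rw [← Nat.card_sum]
    refine Nat.card_congr ((Equiv.sumCompl fun r : G.AcyclicOrientation => r.1 w u).symm.trans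
      (Equiv.sumCongr (Equiv.refl _) (Equiv.subtypeEquivRight fun r => ?_)))
    exact (r.2.rel_iff_not_rel huw).symm
  have hpath : ∀ σ : (G.deleteEdges {s(u, w)}).AcyclicOrientation,
      ¬ ReflTransGen σ.1 u w ∨ ¬ ReflTransGen σ.1 w u := fun σ => not_and_or.1 fun ⟨huw', hwu⟩ =>
    (reflTransGen_iff_eq_or_transGen.1 huw').elim (huw.ne ·.symm)
      fun h => σ.2.acyclic u (h.trans_left hwu)
  rw [hsplit, Nat.card_congr (acyclicOrientationDeleteEdgesEquiv huw.symm),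
    Nat.card_congr (acyclicOrientationDeleteEdgesEquiv huw), Sym2.eq_swap (a := w)]
  exact Nat.card_subtype_add_card_subtype_of_forall_or hpath

variable [DecidableEq V]

theorem mergeInto_ne_of_adj (hne : u ≠ w) {a b : V} (hab : (G.deleteEdges {s(u, w)}).Adj a b) :
    mergeInto hne a ≠ mergeInto hne b := by
  intro h
  have h' := congrArg Subtype.val h
  simp only [coe_mergeInto] at h'
  simp only [deleteEdges_adj, Set.mem_singleton_iff, Sym2.eq_iff] at hab
  split_ifs at h' <;> subst_vars <;> simp_all

theorem card_acyclicOrientation_deletion_contraction [Finite V] (huw : G.Adj u w) :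
    Nat.card G.AcyclicOrientation = Nat.card (G.deleteEdges {s(u, w)}).AcyclicOrientation +
      Nat.card ((G.deleteEdges {s(u, w)}).map (mergeInto huw.ne)).AcyclicOrientation := by
  rw [card_acyclicOrientation_eq_card_deleteEdges_add huw]
  congr 1
  refine Nat.card_congr ((Equiv.subtypeEquivRight fun σ => ?_).trans
    (acyclicOrientationMapEquiv _ (mergeInto_ne_of_adj huw.ne)).symm)
  exact (acyclic_map_mergeInto_iff huw.ne σ.2.acyclic).symm

theorem properColoringCount_deleteEdges [Finite V] (huw : G.Adj u w) (k : ℕ) :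
    properColoringCount (G.deleteEdges {s(u, w)}) k = properColoringCount G k +
      properColoringCount ((G.deleteEdges {s(u, w)}).map (mergeInto huw.ne)) k := by
  have hproper (c : V → Fin k) : ((∀ a b, (G.deleteEdges {s(u, w)}).Adj a b → c a ≠ c b) ∧
      ¬ c u = c w) ↔ ∀ a b, G.Adj a b → c a ≠ c b := by
    refine ⟨fun ⟨hc, hcuw⟩ a b hab => ?_, fun hc => ⟨fun a b hab => hc a b hab.1, hc u w huw⟩⟩
    by_cases he : s(a, b) = s(u, w)
    · rcases Sym2.eq_iff.1 he with ⟨rfl, rfl⟩ | ⟨rfl, rfl⟩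
      exacts [hcuw, Ne.symm hcuw]
    · exact hc a b (by simp [hab, he])
  rw [properColoringCount_map (mergeInto_surjective huw.ne) (mergeInto_ne_of_adj huw.ne),
    properColoringCount, properColoringCount, add_comm, ← Nat.card_sum]
  exact Nat.card_congr ((Equiv.sumCompl fun c => c.1 u = c.1 w).symm.trans (Equiv.sumCongr
    (Equiv.subtypeEquivRight fun c => (exists_comp_mergeInto_eq_iff huw.ne).symm)
    ((Equiv.subtypeSubtypeEquivSubtypeInter _ fun c : V → Fin k => ¬ c u = c w).trans
      (Equiv.subtypeEquivRight hproper))))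

end SimpleGraph

theorem IsChromaticPoly.unique {V : Type*} {G : SimpleGraph V} {P Q : ℤ[X]}
    (hP : IsChromaticPoly G P) (hQ : IsChromaticPoly G Q) : P = Q :=
  eq_of_infinite_eval_eq P Q <| Set.infinite_of_injective_forall_mem Nat.cast_injective
    fun k => by simp [hP k, hQ k]

theorem isChromaticPoly_bot {V : Type*} [Finite V] :
    IsChromaticPoly (⊥ : SimpleGraph V) (X ^ Nat.card V) := fun k => by
  rw [properColoringCount, Nat.card_congr (Equiv.subtypeUnivEquiv fun _ _ _ h => h.elim),
    Nat.card_fun, Nat.card_eq_fintype_card (α := Fin k), Fintype.card_fin]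
  simp

theorem isChromaticPoly_deletion_contraction {V : Type*} [Finite V] [DecidableEq V]
    {G : SimpleGraph V} {u w : V} (huw : G.Adj u w) {Pd Pc : ℤ[X]}
    (hPd : IsChromaticPoly (G.deleteEdges {s(u, w)}) Pd)
    (hPc : IsChromaticPoly ((G.deleteEdges {s(u, w)}).map (mergeInto huw.ne)) Pc) :
    IsChromaticPoly G (Pd - Pc) := fun k => by
  rw [eval_sub, hPd k, hPc k, SimpleGraph.properColoringCount_deleteEdges huw k]
  push_cast
  ring

theorem exists_isChromaticPoly_card_acyclicOrientation (n : ℕ) (V : Type*) [Finite V]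
    (hV : Nat.card V = n) (G : SimpleGraph V) :
    ∃ P : ℤ[X], IsChromaticPoly G P ∧
      (Nat.card G.AcyclicOrientation : ℤ) = (-1) ^ n * P.eval (-1) := by
  classical
  induction n using Nat.strong_induction_on generalizing V with
  | _ n ihn =>
  induction G using WellFoundedLT.induction with
  | _ G ihG =>
  by_cases hG : ∃ u w, G.Adj u w
  · obtain ⟨u, w, huw⟩ := hG
    obtain ⟨m, rfl⟩ : ∃ m, n = m + 1 :=
      Nat.exists_eq_add_one.2 (hV ▸ Nat.card_pos_iff.2 ⟨⟨u⟩, inferInstance⟩)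
    obtain ⟨Pd, hPd, hd⟩ := ihG _ (G.deleteEdges_singleton_lt huw)
    obtain ⟨Pc, hPc, hc⟩ := ihn m m.lt_succ_self {v // v ≠ w}
      (by rw [Nat.card_subtype_ne, hV, Nat.add_sub_cancel])
      ((G.deleteEdges {s(u, w)}).map (mergeInto huw.ne))
    refine ⟨Pd - Pc, isChromaticPoly_deletion_contraction huw hPd hPc, ?_⟩
    rw [G.card_acyclicOrientation_deletion_contraction huw, Nat.cast_add, hd, hc, eval_sub]
    ring
  · obtain rfl : G = ⊥ := by
      ext a b
      simpa using fun h => hG ⟨a, b, h⟩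
    refine ⟨X ^ n, hV ▸ isChromaticPoly_bot, ?_⟩
    simp [SimpleGraph.card_acyclicOrientation_bot, ← mul_pow]

/-- Zaslavsky's theorem for graphical arrangements: the number of regions is
`(-1)^|V| χ_G(-1)`. -/
theorem card_regions_graphical {V : Type*} [Fintype V] (G : SimpleGraph V)
    (P : Polynomial ℤ) (hP : IsChromaticPoly G P) :
    (Nat.card {C : Set (V → ℝ) //
        ∃ x ∈ graphicalComplement G, C = connectedComponentIn (graphicalComplement G) x} : ℤ) =
      (-1) ^ (Fintype.card V) * P.eval (-1) := by
  obtain ⟨Q, hQ, hcard⟩ :=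
    exists_isChromaticPoly_card_acyclicOrientation _ V Nat.card_eq_fintype_card G
  rw [G.card_regions_eq_card_acyclicOrientation, hcard, hP.unique hQ]
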